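/- Define cᵢ⁺ = √2(e_{0,2i} + e_{2i−1,0}) and cᵢ⁻ = √2(e_{0,2i−1} − e_{2i,0}) for i ∈ [1,n] as (4n+1)×(4n+1) complex matrices. Then the paraboson triple relation [{cⱼ^ξ, cₖ^η}, cₗ^ε] = (ε−ξ) δ_{jl} cₖ^η + (ε−η) δ_{kl} cⱼ^ξ holds for all j,k,l ∈ [1,n] and ξ,η,ε ∈ {+1,−1}, where {A,B} = AB + BA and [A,B] = AB − BA. -/
import Mathlib


open Matrix

/-- Index set `[-2n, 2n] ⊂ ℤ` for rows and columns. -/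
abbrev Idx (n : ℕ) := {i : ℤ // i ∈ Finset.Icc (-(2 * (n : ℤ))) (2 * (n : ℤ))}

/-- Elementary matrix `e_{a,b}` with rows/columns indexed by `[-2n,2n]`. -/
def E (n : ℕ) (a b : ℤ) : Matrix (Idx n) (Idx n) ℂ :=
  Matrix.of fun i j => if i.1 = a ∧ j.1 = b then 1 else 0

/-- The paraboson operators:
`b_i^+ = √2 (e_{0,2i} + e_{2i-1,0})`, `b_i^- = √2 (e_{0,2i-1} - e_{2i,0})`. -/
noncomputable def bOp (n : ℕ) (ξ i : ℤ) : Matrix (Idx n) (Idx n) ℂ :=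
  if ξ = 1 then ((Real.sqrt 2 : ℝ) : ℂ) • (E n 0 (2 * i) + E n (2 * i - 1) 0)
  else ((Real.sqrt 2 : ℝ) : ℂ) • (E n 0 (2 * i - 1) - E n (2 * i) 0)

lemma Emul (n : ℕ) (a b c d : ℤ) (h1 : -(2*(n:ℤ)) ≤ b) (h2 : b ≤ 2*(n:ℤ)) :
    E n a b * E n c d = if b = c then E n a d else 0 := by
  ext i p
  simp only [Matrix.mul_apply, E, Matrix.of_apply]
  rw [Finset.sum_eq_single (⟨b, Finset.mem_Icc.mpr ⟨h1, h2⟩⟩ : Idx n)]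
  · rcases eq_or_ne b c with rfl | hbc
    · simp
      split <;> split <;> simp_all
    · simp [hbc]
  · intro m _ hm
    have : m.1 ≠ b := fun h => hm (Subtype.ext h)
    simp [this]
  · simp

set_option maxHeartbeats 4000000 in
/-- the paraboson triple relations
`[{b_j^ξ, b_k^η}, b_l^ε] = (ε−ξ) δ_{jl} b_k^η + (ε−η) δ_{kl} b_j^ξ`. -/
theorem stmt6 (n : ℕ) (j k l ξ η ε : ℤ)
    (hj : 1 ≤ j ∧ j ≤ (n : ℤ)) (hk : 1 ≤ k ∧ k ≤ (n : ℤ)) (hl : 1 ≤ l ∧ l ≤ (n : ℤ))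
    (hξ : ξ = 1 ∨ ξ = -1) (hη : η = 1 ∨ η = -1) (hε : ε = 1 ∨ ε = -1) :
    (bOp n ξ j * bOp n η k + bOp n η k * bOp n ξ j) * bOp n ε l -
      bOp n ε l * (bOp n ξ j * bOp n η k + bOp n η k * bOp n ξ j) =
    ((ε - ξ : ℤ) : ℂ) • (if j = l then bOp n η k else 0) +
      ((ε - η : ℤ) : ℂ) • (if k = l then bOp n ξ j else 0) := by
  obtain ⟨hj1, hj2⟩ := hj; obtain ⟨hk1, hk2⟩ := hk; obtain ⟨hl1, hl2⟩ := hl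
  have hs2 : ((Real.sqrt 2 : ℝ) : ℂ) * ((Real.sqrt 2 : ℝ) : ℂ) = 2 := by
    norm_cast; exact Real.mul_self_sqrt (by norm_num)
  rcases hξ with rfl | rfl <;> rcases hη with rfl | rfl <;> rcases hε with rfl | rfl <;>
    simp only [bOp, reduceIte] <;>
    [skip; skip; skip; skip; skip; skip; skip; skip] <;>
  · generalize hgen : ((Real.sqrt 2 : ℝ) : ℂ) = s at hs2 ⊢
    have hp2 : s^2 = 2 := by rw [sq, hs2]
    have hp3 : s^3 = 2*s := by rw [pow_succ, hp2]
    rcases eq_or_ne j k with hjk | hjk <;> rcases eq_or_ne j l with hjl | hjl <;>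
      rcases eq_or_ne k l with hkl | hkl <;>
    · first
      | (exfalso; omega)
      | (try rw [hjk]
         try rw [hkl]
         try rw [hjl]
         push_cast
         simp (disch := omega) only [smul_mul_assoc, mul_smul_comm, add_mul, mul_add,
           sub_mul, mul_sub, smul_add, smul_sub, smul_smul, neg_mul, mul_neg,
           neg_smul, smul_neg, neg_neg, Emul, if_pos, if_neg,
           ite_true, ite_false, eq_self_iff_true,
           mul_zero, zero_mul, smul_zero, add_zero, zero_add, sub_zero, zero_sub]
         all_goals match_scalars <;> (try ring_nf) <;> (try simp only [hp2, hp3]) <;> try ring)
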